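/- arXiv:2512.07303 — 3 statements merged into one kernel-verified Lean document; each statement's English description precedes it below -/
import Mathlib

section
/- Let f : E → X be a covering map with E simply connected, and let x ∈ X with a chosen point ẽ ∈ E satisfying f(ẽ) = x. Then there is a bijection between the fiber f⁻¹(x) and the fundamental group π₁(X, x) of X at x, given by sending ẽ′ ∈ f⁻¹(x) to the homotopy class of f ∘ γ̃ for any path γ̃ in E from ẽ to ẽ′. -/
/-!
Since `E` is simply connected, all paths from `ẽ` to `e'` are homotopic, so the class of their
images is well defined. The inverse map is monodromy: lift a loop at `x` to a path starting at
`ẽ` and take its endpoint. Lifting the image of a path recovers that path, and the lift of a loop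
`γ` is a path from `ẽ` whose image is `γ`, so the two maps are mutually inverse.
-/

open PathConnectedSpace (somePath)

universe u

namespace IsCoveringMap

variable {E X : Type*} [TopologicalSpace E] [TopologicalSpace X] {p : E → X}
  (cov : IsCoveringMap p) [SimplyConnectedSpace E] {x : X}
include cov

noncomputable def fiberToFundamentalGroup (e₀ e : p ⁻¹' {x}) : FundamentalGroup X x :=
  ((Path.Homotopic.Quotient.mk (somePath e₀.1 e.1)).map ⟨p, cov.continuous⟩).cast
    (e₀.2 : p e₀ = x).symm (e.2 : p e = x).symm

theorem fiberToFundamentalGroup_eq_cast_map {e₀ e : p ⁻¹' {x}}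
    (Γ : Path.Homotopic.Quotient e₀.1 e.1) :
    cov.fiberToFundamentalGroup e₀ e =
      (Γ.map ⟨p, cov.continuous⟩).cast (e₀.2 : p e₀ = x).symm (e.2 : p e = x).symm := by
  rw [fiberToFundamentalGroup, Subsingleton.elim (Path.Homotopic.Quotient.mk _) Γ]

theorem monodromy_fiberToFundamentalGroup (e₀ e : p ⁻¹' {x}) :
    cov.monodromy (cov.fiberToFundamentalGroup e₀ e) e₀ = e :=
  cov.monodromy_eq_of_map_eq (Path.Homotopic.Quotient.mk (somePath e₀.1 e.1))
    ((Path.Homotopic.Quotient.cast_rfl_rfl _).symm.trans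
      (Path.Homotopic.Quotient.cast_cast ..).symm)

theorem fiberToFundamentalGroup_monodromy (e₀ : p ⁻¹' {x}) (γ : FundamentalGroup X x) :
    cov.fiberToFundamentalGroup e₀ (cov.monodromy γ e₀) = γ := by
  rw [cov.fiberToFundamentalGroup_eq_cast_map (cov.liftPathQuotient γ e₀),
    map_liftPathQuotient]
  exact (Path.Homotopic.Quotient.cast_cast ..).trans (Path.Homotopic.Quotient.cast_rfl_rfl _)

theorem fiberToFundamentalGroup_bijective (e₀ : p ⁻¹' {x}) :
    Function.Bijective (cov.fiberToFundamentalGroup e₀) :=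
  Function.bijective_iff_has_inverse.mpr ⟨fun γ ↦ cov.monodromy γ e₀,
    cov.monodromy_fiberToFundamentalGroup e₀, cov.fiberToFundamentalGroup_monodromy e₀⟩

end IsCoveringMap

theorem stmt5_general {E X : Type u} [TopologicalSpace E] [TopologicalSpace X]
    (f : E → X) (hf : IsCoveringMap f)
    [SimplyConnectedSpace E]
    (x : X) (ea : E) (hea : f ea = x) :
    ∃ Φ : (f ⁻¹' {x}) → FundamentalGroup X x,
      (∀ (e' : E) (he' : f e' = x) (γl : Path ea e'),
        Φ ⟨e', he'⟩ =
          FundamentalGroup.fromPath (X := TopCat.of X)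
            ⟦(γl.map hf.continuous).cast hea.symm he'.symm⟧) ∧
      Function.Bijective Φ :=
  ⟨hf.fiberToFundamentalGroup ⟨ea, hea⟩,
    fun e' he' γl ↦ hf.fiberToFundamentalGroup_eq_cast_map (e₀ := ⟨ea, hea⟩) (e := ⟨e', he'⟩)
      (Path.Homotopic.Quotient.mk γl),
    hf.fiberToFundamentalGroup_bijective ⟨ea, hea⟩⟩

/-- For a covering map `f : E → X` with `E` simply connected and a chosen
`ẽ ∈ f⁻¹(x)`, the map sending `e' ∈ f⁻¹(x)` to the homotopy class of `f ∘ γl` for any path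
`γl` in `E` from `ẽ` to `e'` is a bijection between the fiber `f⁻¹(x)` and the fundamental
group `π₁(X, x)`. -/
theorem stmt5 {E X : Type u} [TopologicalSpace E] [TopologicalSpace X]
    (f : E → X) (hf : IsCoveringMap f) (hsurj : Function.Surjective f)
    [SimplyConnectedSpace E]
    (x : X) (ea : E) (hea : f ea = x) :
    ∃ Φ : (f ⁻¹' {x}) → FundamentalGroup X x,
      (∀ (e' : E) (he' : f e' = x) (γl : Path ea e'),
        Φ ⟨e', he'⟩ =
          FundamentalGroup.fromPath (X := TopCat.of X)
            ⟦(γl.map hf.continuous).cast hea.symm he'.symm⟧) ∧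
      Function.Bijective Φ :=
  stmt5_general f hf x ea hea
end

section
/- Let f : E → X be a covering map with E simply connected and locally path-connected. Then for any x ∈ X and any two points ẽ₁, ẽ₂ ∈ f⁻¹(x), there exists a homeomorphism φ : E → E such that f ∘ φ = f and φ(ẽ₁) = ẽ₂ (i.e., the deck transformation group of a simply connected covering acts transitively on each fiber). -/
/-!
Since `E` is simply connected and locally path-connected, the lifting criterion lets the covering
map `p` lift through itself with any prescribed value in the fibre. Lifts `e ↦ e'` and `e' ↦ e`
compose to a lift of `p` fixing a point, which by uniqueness of lifts is the identity.
-/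

namespace IsCoveringMap

variable {E X : Type*} [TopologicalSpace E] [TopologicalSpace X] {p : E → X}
  [SimplyConnectedSpace E] [LocallyPathConnectedSpace E]

theorem existsUnique_continuousMap_comp_eq_self (cov : IsCoveringMap p) {e e' : E}
    (h : p e = p e') : ∃! F : C(E, E), F e = e' ∧ p ∘ F = p :=
  cov.existsUnique_continuousMap_lifts ⟨p, cov.continuous⟩ e e' h.symm

theorem continuousMap_comp_eq_id (cov : IsCoveringMap p) {F G : C(E, E)} {e e' : E}
    (hF : F e = e') (hG : G e' = e) (hpF : p ∘ F = p) (hpG : p ∘ G = p) :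
    G.comp F = ContinuousMap.id E := by
  obtain ⟨_, _, huniq⟩ := cov.existsUnique_continuousMap_comp_eq_self (e := e) rfl
  have hGF : (G.comp F) e = e ∧ p ∘ G.comp F = p := by
    refine ⟨by simp [hF, hG], ?_⟩
    rw [ContinuousMap.coe_comp, ← Function.comp_assoc, hpG, hpF]
  exact (huniq _ hGF).trans (huniq _ ⟨rfl, rfl⟩).symm

theorem exists_deck_homeomorph (cov : IsCoveringMap p) {e e' : E} (h : p e = p e') :
    ∃ φ : E ≃ₜ E, p ∘ φ = p ∧ φ e = e' := by
  obtain ⟨F, ⟨hF, hpF⟩, -⟩ := cov.existsUnique_continuousMap_comp_eq_self h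
  obtain ⟨G, ⟨hG, hpG⟩, -⟩ := cov.existsUnique_continuousMap_comp_eq_self h.symm
  have hGF := cov.continuousMap_comp_eq_id hF hG hpF hpG
  have hFG := cov.continuousMap_comp_eq_id hG hF hpG hpF
  exact ⟨⟨⟨F, G, fun x => congr($hGF x), fun x => congr($hFG x)⟩, F.continuous, G.continuous⟩,
    hpF, hF⟩

end IsCoveringMap

theorem stmt7_general {E X : Type*} [TopologicalSpace E] [TopologicalSpace X]
    (f : E → X) (hf : IsCoveringMap f)
    [SimplyConnectedSpace E] [LocallyPathConnectedSpace E]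
    (x : X) (e₁ e₂ : E) (h₁ : f e₁ = x) (h₂ : f e₂ = x) :
    ∃ φ : E ≃ₜ E, f ∘ φ = f ∧ φ e₁ = e₂ :=
  hf.exists_deck_homeomorph (h₁.trans h₂.symm)

/-- For a covering map `f : E → X` with `E` simply connected and locally
path-connected, for any `x ∈ X` and any two points `e₁, e₂` in the fiber `f⁻¹(x)` there is
a deck transformation (a homeomorphism `φ : E → E` with `f ∘ φ = f`) taking `e₁` to `e₂`. -/
theorem stmt7 {E X : Type*} [TopologicalSpace E] [TopologicalSpace X]
    (f : E → X) (hf : IsCoveringMap f) (hsurj : Function.Surjective f)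
    [SimplyConnectedSpace E] [LocallyPathConnectedSpace E]
    (x : X) (e₁ e₂ : E) (h₁ : f e₁ = x) (h₂ : f e₂ = x) :
    ∃ φ : E ≃ₜ E, f ∘ φ = f ∧ φ e₁ = e₂ :=
  stmt7_general f hf x e₁ e₂ h₁ h₂
end

section
/- Let f₁ : E₁ → X and f₂ : E₂ → X be covering maps of the same space X, where E₁ and E₂ are both simply connected and locally path-connected. Fix x ∈ X, ẽ₁ ∈ f₁⁻¹(x), and ẽ₂ ∈ f₂⁻¹(x). Then there exists a homeomorphism h : E₁ → E₂ such that f₂ ∘ h = f₁ and h(ẽ₁) = ẽ₂ (the universal covering space is unique up to isomorphism of coverings). -/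
/-!
Since `E₁` is simply connected and locally path-connected, `f₁` lifts through the covering `f₂`
to a continuous `g : E₁ → E₂` with `g e₁ = e₂`; symmetrically `f₂` lifts to `g' : E₂ → E₁` with
`g' e₂ = e₁`. Then `g' ∘ g` and `id` are two lifts of `f₁` through `f₁` agreeing at `e₁`, so they
coincide by uniqueness of lifts from a connected space; likewise `g ∘ g' = id`.
-/

namespace IsCoveringMap

variable {E₁ E₂ X : Type*} [TopologicalSpace E₁] [TopologicalSpace E₂] [TopologicalSpace X]
  {f₁ : E₁ → X} {f₂ : E₂ → X}

theorem leftInverse_of_comp_eq [PreconnectedSpace E₁] (hf₁ : IsCoveringMap f₁)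
    {g : C(E₁, E₂)} {g' : C(E₂, E₁)} (hg : f₂ ∘ g = f₁) (hg' : f₁ ∘ g' = f₂) {e₁ : E₁}
    (he₁ : g' (g e₁) = e₁) : Function.LeftInverse g' g := by
  have hlift : f₁ ∘ (g' ∘ g) = f₁ ∘ id := by rw [← Function.comp_assoc, hg', hg, Function.comp_id]
  exact congrFun (hf₁.eq_of_comp_eq (g'.comp g).continuous continuous_id hlift e₁ he₁)

theorem exists_homeomorph_of_simplyConnectedSpace (hf₁ : IsCoveringMap f₁)
    (hf₂ : IsCoveringMap f₂) [SimplyConnectedSpace E₁] [LocallyPathConnectedSpace E₁]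
    [SimplyConnectedSpace E₂] [LocallyPathConnectedSpace E₂] {e₁ : E₁} {e₂ : E₂}
    (he : f₂ e₂ = f₁ e₁) : ∃ h : E₁ ≃ₜ E₂, f₂ ∘ h = f₁ ∧ h e₁ = e₂ := by
  obtain ⟨g, ⟨hge, hg⟩, -⟩ :=
    hf₂.existsUnique_continuousMap_lifts ⟨f₁, hf₁.continuous⟩ e₁ e₂ he
  obtain ⟨g', ⟨hge', hg'⟩, -⟩ :=
    hf₁.existsUnique_continuousMap_lifts ⟨f₂, hf₂.continuous⟩ e₂ e₁ he.symm
  have hleft : Function.LeftInverse g' g :=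
    hf₁.leftInverse_of_comp_eq hg hg' (e₁ := e₁) (by rw [hge, hge'])
  have hright : Function.LeftInverse g g' :=
    hf₂.leftInverse_of_comp_eq hg' hg (e₁ := e₂) (by rw [hge', hge])
  exact ⟨⟨⟨g, g', hleft, hright⟩, g.continuous, g'.continuous⟩, hg, hge⟩

end IsCoveringMap

theorem stmt8_general {E₁ E₂ X : Type*} [TopologicalSpace E₁] [TopologicalSpace E₂]
    [TopologicalSpace X]
    (f₁ : E₁ → X) (f₂ : E₂ → X)
    (hf₁ : IsCoveringMap f₁)
    (hf₂ : IsCoveringMap f₂)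
    [SimplyConnectedSpace E₁] [LocallyPathConnectedSpace E₁]
    [SimplyConnectedSpace E₂] [LocallyPathConnectedSpace E₂]
    (x : X) (e₁ : E₁) (e₂ : E₂) (h₁ : f₁ e₁ = x) (h₂ : f₂ e₂ = x) :
    ∃ h : E₁ ≃ₜ E₂, f₂ ∘ h = f₁ ∧ h e₁ = e₂ :=
  hf₁.exists_homeomorph_of_simplyConnectedSpace hf₂ (h₂.trans h₁.symm)

/-- Two simply connected, locally path-connected covering spaces of the same
space `X` are isomorphic as coverings: there is a homeomorphism `h : E₁ → E₂` with
`f₂ ∘ h = f₁` carrying a chosen basepoint of one fiber to a chosen basepoint of the other. -/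
theorem stmt8 {E₁ E₂ X : Type*} [TopologicalSpace E₁] [TopologicalSpace E₂]
    [TopologicalSpace X]
    (f₁ : E₁ → X) (f₂ : E₂ → X)
    (hf₁ : IsCoveringMap f₁) (hsurj₁ : Function.Surjective f₁)
    (hf₂ : IsCoveringMap f₂) (hsurj₂ : Function.Surjective f₂)
    [SimplyConnectedSpace E₁] [LocallyPathConnectedSpace E₁]
    [SimplyConnectedSpace E₂] [LocallyPathConnectedSpace E₂]
    (x : X) (e₁ : E₁) (e₂ : E₂) (h₁ : f₁ e₁ = x) (h₂ : f₂ e₂ = x) :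
    ∃ h : E₁ ≃ₜ E₂, f₂ ∘ h = f₁ ∧ h e₁ = e₂ :=
  stmt8_general f₁ f₂ hf₁ hf₂ x e₁ e₂ h₁ h₂
end
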